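/- Exponential bound on the number of cuts with a given maximum frontier time: for any fixed T ∈ {0,…,N}, the number of distinct nonempty consistent cuts whose maximum frontier time equals T is at most (ε + 2)^n. -/

import Mathlib

/-- An event is a pair (stream index, timestamp), with streams `Fin n` and
timestamps `Fin (N+1)` (i.e. `{0,…,N}`). The generating relation `R` with
clock-skew bound `ε`: same-stream order, and cross-stream order with skew. -/
def genR (n N ε : ℕ) (e f : Fin n × Fin (N + 1)) : Prop :=
  (e.1 = f.1 ∧ e.2 < f.2) ∨ (e.2 : ℕ) + ε < (f.2 : ℕ)

/-- The happened-before relation `⇝` with skew `ε`: transitive closure of `R`. -/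
def hb (n N ε : ℕ) : Fin n × Fin (N + 1) → Fin n × Fin (N + 1) → Prop :=
  Relation.TransGen (genR n N ε)

/-- A consistent cut: a set `C` of events such that `e ∈ C` and `f ⇝ e` imply `f ∈ C`. -/
def ConsistentCut (n N ε : ℕ) (C : Set (Fin n × Fin (N + 1))) : Prop :=
  ∀ e ∈ C, ∀ f, hb n N ε f e → f ∈ C

/-- The maximum frontier time of a cut: the largest timestamp occurring in `C`
(equivalently, the maximum of the per-stream frontier times `m_i(C)`). -/
noncomputable def maxFrontierTime (n N : ℕ) (C : Set (Fin n × Fin (N + 1))) : ℕ :=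
  sSup {t : ℕ | ∃ e ∈ C, (e.2 : ℕ) = t}

/-!
Every event more than `ε` before the maximum frontier time `T` happened before the event at time `T`,
so it lies in the cut. Hence on each stream the cut is an initial segment of `{0,…,N}` whose length
lies between `T - ε` and `T + 1`, and a consistent cut is determined by these `n` lengths.
-/

theorem Fin.mem_iff_lt_card_of_isLowerSet {m : ℕ} {s : Finset (Fin m)}
    (hs : IsLowerSet (s : Set (Fin m))) (t : Fin m) : t ∈ s ↔ (t : ℕ) < s.card := by
  constructor
  · intro ht
    have hIic : Finset.Iic t ⊆ s := fun u hu => hs (Finset.mem_Iic.mp hu) ht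
    simpa [Fin.card_Iic] using Finset.card_le_card hIic
  · intro hlt
    by_contra ht
    have hIio : s ⊆ Finset.Iio t := fun u hu =>
      Finset.mem_Iio.mpr (lt_of_not_ge fun htu => ht (hs htu hu))
    simpa [Fin.card_Iio] using hlt.trans_le (Finset.card_le_card hIio)

section Cuts

variable {n N ε : ℕ} {C : Set (Fin n × Fin (N + 1))}

theorem ConsistentCut.mem_of_lt (hC : ConsistentCut n N ε C) {i : Fin n} {s t : Fin (N + 1)}
    (ht : (i, t) ∈ C) (hst : s < t) : (i, s) ∈ C :=
  hC _ ht _ (.single (.inl ⟨rfl, hst⟩))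

theorem ConsistentCut.mem_of_add_lt (hC : ConsistentCut n N ε C) {e f : Fin n × Fin (N + 1)}
    (he : e ∈ C) (hfe : (f.2 : ℕ) + ε < e.2) : f ∈ C :=
  hC _ he _ (.single (.inr hfe))

theorem bddAbove_timestamps (C : Set (Fin n × Fin (N + 1))) :
    BddAbove {t : ℕ | ∃ e ∈ C, (e.2 : ℕ) = t} :=
  ⟨N, by rintro _ ⟨e, -, rfl⟩; exact Nat.le_of_lt_succ e.2.isLt⟩

theorem le_maxFrontierTime {e : Fin n × Fin (N + 1)} (he : e ∈ C) :
    (e.2 : ℕ) ≤ maxFrontierTime n N C :=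
  le_csSup (bddAbove_timestamps C) ⟨e, he, rfl⟩

theorem exists_eq_maxFrontierTime (hC : C.Nonempty) :
    ∃ e ∈ C, (e.2 : ℕ) = maxFrontierTime n N C := by
  obtain ⟨e, he⟩ := hC
  exact Nat.sSup_mem (s := {t : ℕ | ∃ e ∈ C, (e.2 : ℕ) = t}) ⟨_, e, he, rfl⟩
    (bddAbove_timestamps C)

open Classical in
noncomputable def streamFiber (C : Set (Fin n × Fin (N + 1))) (i : Fin n) : Finset (Fin (N + 1)) :=
  {t | (i, t) ∈ C}

theorem mem_streamFiber {i : Fin n} {t : Fin (N + 1)} : t ∈ streamFiber C i ↔ (i, t) ∈ C := by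
  simp [streamFiber]

theorem ConsistentCut.mem_iff_lt_card_streamFiber (hC : ConsistentCut n N ε C) (i : Fin n)
    (t : Fin (N + 1)) : (i, t) ∈ C ↔ (t : ℕ) < (streamFiber C i).card := by
  rw [← mem_streamFiber]
  refine Fin.mem_iff_lt_card_of_isLowerSet (fun s t hst ht => ?_) t
  rcases hst.lt_or_eq with hlt | rfl
  · exact mem_streamFiber.mpr (hC.mem_of_lt (mem_streamFiber.mp ht) hlt)
  · exact ht

theorem ConsistentCut.eq_of_card_streamFiber_eq {C' : Set (Fin n × Fin (N + 1))}
    (hC : ConsistentCut n N ε C) (hC' : ConsistentCut n N ε C')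
    (h : ∀ i, (streamFiber C i).card = (streamFiber C' i).card) : C = C' := by
  ext ⟨i, t⟩
  rw [hC.mem_iff_lt_card_streamFiber, hC'.mem_iff_lt_card_streamFiber, h]

theorem ConsistentCut.card_streamFiber_mem_Icc (hC : ConsistentCut n N ε C) (hne : C.Nonempty)
    (i : Fin n) :
    (streamFiber C i).card ∈ Finset.Icc (maxFrontierTime n N C - ε) (maxFrontierTime n N C + 1) := by
  obtain ⟨e, he, heT⟩ := exists_eq_maxFrontierTime hne
  rw [Finset.mem_Icc, ← heT]
  constructor
  · by_contra! hlt
    let t : Fin (N + 1) := ⟨(streamFiber C i).card, by omega⟩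
    have ht : (i, t) ∈ C := hC.mem_of_add_lt he (by simp only [t]; omega)
    exact (lt_irrefl t.val) ((hC.mem_iff_lt_card_streamFiber i t).mp ht)
  · have hsub : streamFiber C i ⊆ Finset.Iic e.2 := fun t ht =>
      Finset.mem_Iic.mpr (Fin.le_def.mpr (le_maxFrontierTime (mem_streamFiber.mp ht) |>.trans heT.ge))
    simpa [Fin.card_Iic] using Finset.card_le_card hsub

end Cuts

theorem card_cuts_with_max_frontier_general (n N ε : ℕ)
    (T : ℕ) :
    Set.ncard {C : Set (Fin n × Fin (N + 1)) |
        ConsistentCut n N ε C ∧ C.Nonempty ∧ maxFrontierTime n N C = T} ≤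
      (ε + 2) ^ n := by
  let lengths : Finset (Fin n → ℕ) := Fintype.piFinset fun _ => Finset.Icc (T - ε) (T + 1)
  calc _ ≤ (lengths : Set (Fin n → ℕ)).ncard := by
        refine Set.ncard_le_ncard_of_injOn (fun C i => (streamFiber C i).card) ?_ ?_
        · rintro C ⟨hC, hne, rfl⟩
          exact Fintype.mem_piFinset.mpr (hC.card_streamFiber_mem_Icc hne)
        · rintro C ⟨hC, -⟩ C' ⟨hC', -⟩ h
          exact hC.eq_of_card_streamFiber_eq hC' (congrFun h)
    _ = (T + 2 - (T - ε)) ^ n := by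
        rw [Set.ncard_coe_finset, Fintype.card_piFinset_const, Nat.card_Icc]
    _ ≤ (ε + 2) ^ n := Nat.pow_le_pow_left (by omega) n

/-- for any fixed `T ∈ {0,…,N}`, the number of distinct nonempty
consistent cuts whose maximum frontier time equals `T` is at most `(ε + 2)^n`. -/
theorem card_cuts_with_max_frontier (n N ε : ℕ) (hn : 1 ≤ n) (hε : 1 ≤ ε)
    (T : ℕ) (hT : T ≤ N) :
    Set.ncard {C : Set (Fin n × Fin (N + 1)) |
        ConsistentCut n N ε C ∧ C.Nonempty ∧ maxFrontierTime n N C = T} ≤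
      (ε + 2) ^ n :=
  card_cuts_with_max_frontier_general n N ε T
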